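/- arXiv:1407.7310 — 3 statements merged into one kernel-verified Lean document; each statement's English description precedes it below -/
import Mathlib

section
/- Let R1, R2, R3 be independent real-valued random variables, each having the same symmetric distribution with a density (so that P(Ri = x) = 0 for all x and Ri is distributed as -Ri). Then P(R1 + R3 > 0 and R2 + R3 > 0) = 1/3. -/
open MeasureTheory ProbabilityTheory Set
open scoped ENNReal

/-- The 3-cycle `0 ↦ 1 ↦ 2 ↦ 0` on `Fin 3`. -/
def stmt0_c3 : Equiv.Perm (Fin 3) := ⟨![1, 2, 0], ![2, 0, 1], by decide, by decide⟩

/-- The transposition `1 ↔ 2` on `Fin 3`. -/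
def stmt0_s12 : Equiv.Perm (Fin 3) := ⟨![0, 2, 1], ![0, 2, 1], by decide, by decide⟩

/-- If `R 0, R 1, R 2` are independent real random variables with common
distribution `μ` that is absolutely continuous (has a density) and symmetric
(invariant under negation), then `P(R 0 + R 2 > 0 and R 1 + R 2 > 0) = 1/3`. -/
theorem stmt_0 {Ω : Type*} [MeasureSpace Ω] [IsProbabilityMeasure (ℙ : Measure Ω)]
    (R : Fin 3 → Ω → ℝ) (hmeas : ∀ i, Measurable (R i))
    (hindep : iIndepFun R ℙ)
    (μ : Measure ℝ) (hid : ∀ i, Measure.map (R i) ℙ = μ)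
    (hac : μ ≪ volume)
    (hsymm : Measure.map (fun x : ℝ => -x) μ = μ) :
    ℙ {ω | 0 < R 0 ω + R 2 ω ∧ 0 < R 1 ω + R 2 ω} = 1 / 3 := by
  classical
  have hμ : IsProbabilityMeasure μ := by
    rw [← hid 0]; exact Measure.isProbabilityMeasure_map (hmeas 0).aemeasurable
  set π : Measure (Fin 3 → ℝ) := Measure.pi (fun _ => μ) with hπdef
  have hπprob : IsProbabilityMeasure π := by
    constructor
    rw [hπdef, show (Set.univ : Set (Fin 3 → ℝ)) = Set.pi Set.univ (fun _ => Set.univ) by simp,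
      Measure.pi_pi]
    simp
  have hRmeas : Measurable (fun ω i => R i ω) := measurable_pi_iff.mpr hmeas
  -- joint law is the product measure
  have hjoint : Measure.map (fun ω i => R i ω) ℙ = π := by
    refine (Measure.pi_eq fun s hs => ?_).symm
    rw [Measure.map_apply hRmeas (MeasurableSet.univ_pi hs)]
    have hpre : (fun ω i => R i ω) ⁻¹' Set.pi Set.univ s = ⋂ i ∈ Finset.univ, R i ⁻¹' s i := by
      ext ω; simp [Set.mem_pi]
    rw [hpre, hindep.measure_inter_preimage_eq_mul Finset.univ (fun i _ => hs i)]
    refine Finset.prod_congr rfl fun i _ => ?_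
    rw [← hid i, Measure.map_apply (hmeas i) (hs i)]
  -- π is invariant under coordinate permutations
  have hperm : ∀ σ : Equiv.Perm (Fin 3),
      Measure.map (fun x : Fin 3 → ℝ => x ∘ σ) π = π := by
    intro σ
    have hm : Measurable (fun x : Fin 3 → ℝ => x ∘ σ) :=
      measurable_pi_iff.mpr fun i => measurable_pi_apply _
    refine (Measure.pi_eq fun s hs => ?_).symm
    rw [Measure.map_apply hm (MeasurableSet.univ_pi hs)]
    have hpre : (fun x : Fin 3 → ℝ => x ∘ σ) ⁻¹' Set.pi Set.univ s
        = Set.pi Set.univ (fun j => s (σ.symm j)) := by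
      ext x
      simp only [Set.mem_preimage, Set.mem_pi, Set.mem_univ, true_implies, Function.comp]
      constructor
      · intro h j; simpa using h (σ.symm j)
      · intro h i; simpa using h (σ i)
    rw [hpre, Measure.pi_pi]
    exact Equiv.prod_comp σ.symm fun j => μ (s j)
  -- π is invariant under negating coordinate 2
  have hneg : MeasurePreserving (fun x : ℝ => -x) μ μ := ⟨measurable_neg, hsymm⟩
  set g : Fin 3 → ℝ → ℝ := fun i => if i = 2 then (fun x => -x) else id with hgdef
  have hg : ∀ i, MeasurePreserving (g i) μ μ := by
    intro i
    rw [hgdef]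
    dsimp only
    split
    · exact hneg
    · exact MeasurePreserving.id μ
  have hN : MeasurePreserving (fun x : Fin 3 → ℝ => fun i => g i (x i)) π π :=
    measurePreserving_pi _ _ hg
  have hg0 : g 0 = id := if_neg (by decide)
  have hg1 : g 1 = id := if_neg (by decide)
  have hg2 : g 2 = fun x => -x := if_pos rfl
  -- sets
  set E : Set (Fin 3 → ℝ) := {x | 0 < x 0 + x 2 ∧ 0 < x 1 + x 2} with hEdef
  set A0 : Set (Fin 3 → ℝ) := {x | x 0 < x 1 ∧ x 0 < x 2} with hA0def
  set A1 : Set (Fin 3 → ℝ) := {x | x 1 < x 0 ∧ x 1 < x 2} with hA1def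
  set A2 : Set (Fin 3 → ℝ) := {x | x 2 < x 0 ∧ x 2 < x 1} with hA2def
  have hE : MeasurableSet E :=
    (measurableSet_lt measurable_const ((measurable_pi_apply 0).add (measurable_pi_apply 2))).inter
      (measurableSet_lt measurable_const ((measurable_pi_apply 1).add (measurable_pi_apply 2)))
  have hA0 : MeasurableSet A0 :=
    (measurableSet_lt (measurable_pi_apply 0) (measurable_pi_apply 1)).inter
      (measurableSet_lt (measurable_pi_apply 0) (measurable_pi_apply 2))
  have hA1 : MeasurableSet A1 :=
    (measurableSet_lt (measurable_pi_apply 1) (measurable_pi_apply 0)).inter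
      (measurableSet_lt (measurable_pi_apply 1) (measurable_pi_apply 2))
  have hA2 : MeasurableSet A2 :=
    (measurableSet_lt (measurable_pi_apply 2) (measurable_pi_apply 0)).inter
      (measurableSet_lt (measurable_pi_apply 2) (measurable_pi_apply 1))
  -- target probability equals π E
  have hPE : ℙ {ω | 0 < R 0 ω + R 2 ω ∧ 0 < R 1 ω + R 2 ω} = π E := by
    have h1 : {ω | 0 < R 0 ω + R 2 ω ∧ 0 < R 1 ω + R 2 ω} = (fun ω i => R i ω) ⁻¹' E := rfl
    rw [h1, ← Measure.map_apply hRmeas hE, hjoint]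
  -- π E = π A2
  have hEA2 : π E = π A2 := by
    conv_lhs => rw [← hN.map_eq]
    rw [Measure.map_apply hN.measurable hE]
    congr 1
    ext x
    simp only [Set.mem_preimage, hEdef, hA2def, Set.mem_setOf_eq, hg0, hg1, hg2, id]
    constructor
    · rintro ⟨h1, h2⟩; constructor <;> linarith
    · rintro ⟨h1, h2⟩; constructor <;> linarith
  -- values of the permutations
  have c0 : stmt0_c3 0 = 1 := rfl
  have c1 : stmt0_c3 1 = 2 := rfl
  have c2 : stmt0_c3 2 = 0 := rfl
  have s0 : stmt0_s12 0 = 0 := rfl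
  have s1 : stmt0_s12 1 = 2 := rfl
  have s2 : stmt0_s12 2 = 1 := rfl
  have hcm : Measurable (fun x : Fin 3 → ℝ => x ∘ stmt0_c3) :=
    measurable_pi_iff.mpr fun i => measurable_pi_apply _
  have hsm : Measurable (fun x : Fin 3 → ℝ => x ∘ stmt0_s12) :=
    measurable_pi_iff.mpr fun i => measurable_pi_apply _
  -- π A2 = π A0 and π A2 = π A1
  have hA2A0 : π A2 = π A0 := by
    conv_lhs => rw [← hperm stmt0_c3]
    rw [Measure.map_apply hcm hA2]
    congr 1
  have hA2A1 : π A2 = π A1 := by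
    conv_lhs => rw [← hperm stmt0_s12]
    rw [Measure.map_apply hsm hA2]
    congr 1
  -- ties are null
  have hsing : ∀ a : ℝ, μ {a} = 0 := fun a => hac (measure_singleton a)
  set t01 : Set (Fin 3 → ℝ) := {x | x 0 = x 1} with ht01def
  set t02 : Set (Fin 3 → ℝ) := {x | x 0 = x 2} with ht02def
  set t12 : Set (Fin 3 → ℝ) := {x | x 1 = x 2} with ht12def
  have ht01m : MeasurableSet t01 :=
    measurableSet_eq_fun (measurable_pi_apply 0) (measurable_pi_apply 1)
  have hdiagm : MeasurableSet {q : ℝ × ℝ | q.1 = q.2} :=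
    measurableSet_eq_fun measurable_fst measurable_snd
  have hpm : Measurable (fun x : Fin 3 → ℝ => (x 0, x 1)) :=
    (measurable_pi_apply 0).prodMk (measurable_pi_apply 1)
  have hmap01 : Measure.map (fun x : Fin 3 → ℝ => (x 0, x 1)) π = μ.prod μ := by
    refine (Measure.prod_eq fun s t hs ht => ?_).symm
    rw [Measure.map_apply hpm (hs.prod ht)]
    have hpre : (fun x : Fin 3 → ℝ => (x 0, x 1)) ⁻¹' (s ×ˢ t)
        = Set.pi Set.univ (fun i => if i = 0 then s else if i = 1 then t else Set.univ) := by
      ext x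
      simp only [Set.mem_preimage, Set.mem_prod, Set.mem_pi, Set.mem_univ, true_implies]
      constructor
      · rintro ⟨h1, h2⟩ i
        fin_cases i <;> simp [h1, h2]
      · intro h
        refine ⟨by simpa using h 0, by simpa using h 1⟩
    rw [hpre, Measure.pi_pi, Fin.prod_univ_three, if_pos rfl,
      if_neg (show ¬(1 : Fin 3) = 0 by decide), if_pos rfl,
      if_neg (show ¬(2 : Fin 3) = 0 by decide), if_neg (show ¬(2 : Fin 3) = 1 by decide),
      measure_univ, mul_one]
  have ht01 : π t01 = 0 := by
    have hpre : t01 = (fun x : Fin 3 → ℝ => (x 0, x 1)) ⁻¹' {q : ℝ × ℝ | q.1 = q.2} := rfl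
    rw [hpre, ← Measure.map_apply hpm hdiagm, hmap01, Measure.prod_apply hdiagm]
    have : ∀ a : ℝ, μ (Prod.mk a ⁻¹' {q : ℝ × ℝ | q.1 = q.2}) = 0 := by
      intro a
      have : Prod.mk a ⁻¹' {q : ℝ × ℝ | q.1 = q.2} = {a} := by
        ext b; simp [eq_comm]
      rw [this]; exact hsing a
    simp only [this, lintegral_zero]
  have ht02 : π t02 = 0 := by
    have h1 : π t02 = π t01 := by
      conv_rhs => rw [← hperm stmt0_s12]
      rw [Measure.map_apply hsm ht01m]
      congr 1
    rw [h1, ht01]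
  have ht12 : π t12 = 0 := by
    have h1 : π t12 = π t01 := by
      conv_rhs => rw [← hperm stmt0_c3]
      rw [Measure.map_apply hcm ht01m]
      congr 1
    rw [h1, ht01]
  -- the complement of the union is contained in the ties
  have hsub : (A0 ∪ A1 ∪ A2)ᶜ ⊆ t01 ∪ t02 ∪ t12 := by
    intro x hx
    simp only [Set.mem_compl_iff, Set.mem_union, hA0def, hA1def, hA2def, Set.mem_setOf_eq,
      not_or] at hx
    obtain ⟨⟨h0, h1⟩, h2⟩ := hx
    simp only [Set.mem_union, ht01def, ht02def, ht12def, Set.mem_setOf_eq]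
    by_contra hcon
    push_neg at hcon
    obtain ⟨⟨e01, e02⟩, e12⟩ := hcon
    rcases lt_or_gt_of_ne e01 with p01 | p01 <;> rcases lt_or_gt_of_ne e02 with p02 | p02 <;>
      rcases lt_or_gt_of_ne e12 with p12 | p12 <;>
      first
        | exact h0 ⟨by linarith, by linarith⟩
        | exact h1 ⟨by linarith, by linarith⟩
        | exact h2 ⟨by linarith, by linarith⟩
  have hcompl : π (A0 ∪ A1 ∪ A2)ᶜ = 0 :=
    measure_mono_null hsub (measure_union_null (measure_union_null ht01 ht02) ht12)
  have hU : π (A0 ∪ A1 ∪ A2) = 1 :=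
    (prob_compl_eq_zero_iff ((hA0.union hA1).union hA2)).mp hcompl
  -- disjointness
  have hd01 : Disjoint A0 A1 := by
    rw [Set.disjoint_left]
    rintro x ⟨h1, _⟩ ⟨h2, _⟩
    exact absurd h2 (not_lt.mpr h1.le)
  have hd02 : Disjoint A0 A2 := by
    rw [Set.disjoint_left]
    rintro x ⟨_, h1⟩ ⟨h2, _⟩
    exact absurd h2 (not_lt.mpr h1.le)
  have hd12 : Disjoint A1 A2 := by
    rw [Set.disjoint_left]
    rintro x ⟨_, h1⟩ ⟨_, h2⟩
    exact absurd h2 (not_lt.mpr h1.le)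
  have hsum : π A0 + π A1 + π A2 = 1 := by
    rw [← measure_union hd01 hA1, ← measure_union (Set.disjoint_union_left.mpr ⟨hd02, hd12⟩) hA2]
    exact hU
  rw [← hA2A0, ← hA2A1] at hsum
  have h3 : (3 : ℝ≥0∞) * π A2 = 1 := by
    rw [show (3 : ℝ≥0∞) * π A2 = π A2 + π A2 + π A2 by ring]
    exact hsum
  rw [hPE, hEA2]
  calc π A2 = 3⁻¹ * (3 * π A2) := by
        rw [← mul_assoc, ENNReal.inv_mul_cancel (by norm_num) (by norm_num), one_mul]
    _ = 1 / 3 := by rw [h3, mul_one, one_div]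
end

section
/- For h in R^{T_N} on the discrete torus T_N = Z/NZ (N > 4), define G1(i,h) = (h_{i+1}-h_i)^2 + (h_i-h_{i-1})^2, G2(i,h) = (h_{i+1}-h_i)(h_i-h_{i-1}), and Δh(i) = h_{i+1} + h_{i-1} - 2h_i. Then sum_{i in T_N} G1(i,h) Δh(i) = - sum_{i in T_N} G2(i,h) Δh(i). -/
/-- On the discrete torus `T_N = ZMod N` (`N > 4`), with
`G1(i,h) = (h_{i+1}-h_i)^2 + (h_i-h_{i-1})^2`,
`G2(i,h) = (h_{i+1}-h_i)(h_i-h_{i-1})` and `Δh(i) = h_{i+1}+h_{i-1}-2h_i`,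
one has `∑_i G1(i,h) Δh(i) = -∑_i G2(i,h) Δh(i)`. -/
theorem stmt_2 (N : ℕ) [NeZero N] (hN : 4 < N) (h : ZMod N → ℝ) :
    ∑ i : ZMod N,
        ((h (i + 1) - h i) ^ 2 + (h i - h (i - 1)) ^ 2) * (h (i + 1) + h (i - 1) - 2 * h i)
      = - ∑ i : ZMod N,
        ((h (i + 1) - h i) * (h i - h (i - 1))) * (h (i + 1) + h (i - 1) - 2 * h i) := by
  have key : ∑ i : ZMod N, (h (i + 1) - h i) ^ 3
      = ∑ i : ZMod N, (h i - h (i - 1)) ^ 3 := by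
    exact Fintype.sum_equiv (Equiv.addRight 1) _ _ (fun i => by simp)
  rw [eq_neg_iff_add_eq_zero, ← Finset.sum_add_distrib]
  have : ∀ i : ZMod N,
      ((h (i + 1) - h i) ^ 2 + (h i - h (i - 1)) ^ 2) * (h (i + 1) + h (i - 1) - 2 * h i)
      + ((h (i + 1) - h i) * (h i - h (i - 1))) * (h (i + 1) + h (i - 1) - 2 * h i)
      = (h (i + 1) - h i) ^ 3 - (h i - h (i - 1)) ^ 3 := fun i => by ring
  simp only [this, Finset.sum_sub_distrib, key, sub_self]
end

section
/- Let Δh(i) = h_{i+1}+h_{i-1}-2h_i, G1(i,h) = (h_{i+1}-h_i)^2 + (h_i-h_{i-1})^2 and G2(i,h) = (h_{i+1}-h_i)(h_i-h_{i-1}) on the discrete torus T_N (N>4), and let α_2 : T_N → R be supported on {-1,0,1} with α_2(1) = α_2(-1). Then Σ_{i ∈ T_N} ∂/∂h_i [ (α_2 * G1)(i,h) ] = 0 and Σ_{i ∈ T_N} ∂/∂h_i [ (α_2 * G2)(i,h) ] = 0. -/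
open Finset

private lemma hasDerivAt_update' {N : ℕ} [NeZero N] (h : ZMod N → ℝ) (i j : ZMod N) (t : ℝ) :
    HasDerivAt (fun t : ℝ => Function.update h i t j) (if j = i then 1 else 0) t := by
  rcases eq_or_ne j i with rfl | hj
  · simpa using hasDerivAt_id' t
  · simpa [Function.update_of_ne hj, if_neg hj] using hasDerivAt_const t (h j)

private lemma telescope1 {N : ℕ} [NeZero N] (h : ZMod N → ℝ) :
    ∑ k : ZMod N, h (k + 1) = ∑ k : ZMod N, h k :=
  Fintype.sum_equiv (Equiv.addRight 1) _ _ (fun _ => rfl)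

private lemma telescope2 {N : ℕ} [NeZero N] (h : ZMod N → ℝ) :
    ∑ k : ZMod N, h (k - 1) = ∑ k : ZMod N, h k :=
  Fintype.sum_equiv (Equiv.subRight 1) _ _ (fun _ => rfl)

/-- Vanishing of the discrete divergence of `α₂ * G1` and `α₂ * G2` on the torus:
for `α₂` supported on `{-1,0,1}` with `α₂(1)=α₂(-1)`,
`∑_i ∂/∂h_i (α₂*G1)(i,h) = 0` and `∑_i ∂/∂h_i (α₂*G2)(i,h) = 0`, where
`G1(k,h) = (h_{k+1}-h_k)² + (h_k-h_{k-1})²`, `G2(k,h) = (h_{k+1}-h_k)(h_k-h_{k-1})`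
and `(α₂*G)(i,h) = ∑_k α₂(i-k) G(k,h)`. -/
theorem stmt_5 (N : ℕ) [NeZero N] (hN : 4 < N) (α₂ : ZMod N → ℝ)
    (hsupp : ∀ i : ZMod N, i ≠ 0 → i ≠ 1 → i ≠ -1 → α₂ i = 0)
    (hsym : α₂ 1 = α₂ (-1)) (h : ZMod N → ℝ) :
    (∑ i : ZMod N, deriv (fun t : ℝ =>
        ∑ k : ZMod N, α₂ (i - k) *
          ((Function.update h i t (k + 1) - Function.update h i t k) ^ 2
            + (Function.update h i t k - Function.update h i t (k - 1)) ^ 2)) (h i) = 0) ∧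
    (∑ i : ZMod N, deriv (fun t : ℝ =>
        ∑ k : ZMod N, α₂ (i - k) *
          ((Function.update h i t (k + 1) - Function.update h i t k)
            * (Function.update h i t k - Function.update h i t (k - 1)))) (h i) = 0) := by
  have upd : ∀ i : ZMod N, Function.update h i (h i) = h := fun i => Function.update_eq_self i h
  set χ : ZMod N → ZMod N → ℝ := fun i j => if j = i then 1 else 0 with hχ
  have d1 : ∀ i : ZMod N, deriv (fun t : ℝ =>
        ∑ k : ZMod N, α₂ (i - k) *
          ((Function.update h i t (k + 1) - Function.update h i t k) ^ 2
            + (Function.update h i t k - Function.update h i t (k - 1)) ^ 2)) (h i)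
      = ∑ k : ZMod N, α₂ (i - k) *
          (2 * (h (k + 1) - h k) * (χ i (k + 1) - χ i k)
            + 2 * (h k - h (k - 1)) * (χ i k - χ i (k - 1))) := by
    intro i
    have H : HasDerivAt (fun t : ℝ =>
        ∑ k : ZMod N, α₂ (i - k) *
          ((Function.update h i t (k + 1) - Function.update h i t k) ^ 2
            + (Function.update h i t k - Function.update h i t (k - 1)) ^ 2))
        (∑ k : ZMod N, α₂ (i - k) *
          (2 * (h (k + 1) - h k) * (χ i (k + 1) - χ i k)
            + 2 * (h k - h (k - 1)) * (χ i k - χ i (k - 1)))) (h i) := by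
      apply HasDerivAt.fun_sum
      intro k _
      have hu := hasDerivAt_update' h i (k + 1) (h i)
      have hk := hasDerivAt_update' h i k (h i)
      have hm := hasDerivAt_update' h i (k - 1) (h i)
      have := ((((hu.sub hk).pow 2).add ((hk.sub hm).pow 2)).const_mul (α₂ (i - k)))
      convert this using 1
      · rfl
      simp [upd i, hχ]
      simp [upd i, hχ]
    exact H.deriv
  have d2 : ∀ i : ZMod N, deriv (fun t : ℝ =>
        ∑ k : ZMod N, α₂ (i - k) *
          ((Function.update h i t (k + 1) - Function.update h i t k)
            * (Function.update h i t k - Function.update h i t (k - 1)))) (h i)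
      = ∑ k : ZMod N, α₂ (i - k) *
          ((χ i (k + 1) - χ i k) * (h k - h (k - 1))
            + (h (k + 1) - h k) * (χ i k - χ i (k - 1))) := by
    intro i
    have H : HasDerivAt (fun t : ℝ =>
        ∑ k : ZMod N, α₂ (i - k) *
          ((Function.update h i t (k + 1) - Function.update h i t k)
            * (Function.update h i t k - Function.update h i t (k - 1))))
        (∑ k : ZMod N, α₂ (i - k) *
          ((χ i (k + 1) - χ i k) * (h k - h (k - 1))
            + (h (k + 1) - h k) * (χ i k - χ i (k - 1)))) (h i) := by
      apply HasDerivAt.fun_sum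
      intro k _
      have hu := hasDerivAt_update' h i (k + 1) (h i)
      have hk := hasDerivAt_update' h i k (h i)
      have hm := hasDerivAt_update' h i (k - 1) (h i)
      have := ((hu.sub hk).mul (hk.sub hm)).const_mul (α₂ (i - k))
      convert this using 1
      · rfl
      simp [upd i, hχ]
      simp [upd i, hχ]
    exact H.deriv
  constructor
  · simp only [d1]
    rw [Finset.sum_comm]
    have inner : ∀ k : ZMod N, (∑ i : ZMod N, α₂ (i - k) *
          (2 * (h (k + 1) - h k) * (χ i (k + 1) - χ i k)
            + 2 * (h k - h (k - 1)) * (χ i k - χ i (k - 1))))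
        = (α₂ 1 - α₂ 0) * (2 * (h (k + 1) - h k))
            + (α₂ 0 - α₂ (-1)) * (2 * (h k - h (k - 1))) := by
      intro k
      have e : ∀ i : ZMod N, α₂ (i - k) *
          (2 * (h (k + 1) - h k) * (χ i (k + 1) - χ i k)
            + 2 * (h k - h (k - 1)) * (χ i k - χ i (k - 1)))
        = (if (k + 1 : ZMod N) = i then α₂ (i - k) * (2 * (h (k + 1) - h k)) else 0)
          - (if (k : ZMod N) = i then α₂ (i - k) * (2 * (h (k + 1) - h k)) else 0)
          + ((if (k : ZMod N) = i then α₂ (i - k) * (2 * (h k - h (k - 1))) else 0)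
          - (if (k - 1 : ZMod N) = i then α₂ (i - k) * (2 * (h k - h (k - 1))) else 0)) := by
        intro i
        simp only [hχ]
        split_ifs <;> ring
      simp only [e, Finset.sum_add_distrib, Finset.sum_sub_distrib, Finset.sum_ite_eq,
        Finset.mem_univ, if_true]
      simp only [add_sub_cancel_left, sub_self, sub_sub_cancel_left]
      ring
    simp only [inner]
    simp only [Finset.sum_add_distrib, ← Finset.mul_sum, mul_sub, Finset.sum_sub_distrib]
    rw [telescope1 h, telescope2 h]
    ring
  · simp only [d2]
    rw [Finset.sum_comm]
    have inner : ∀ k : ZMod N, (∑ i : ZMod N, α₂ (i - k) *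
          ((χ i (k + 1) - χ i k) * (h k - h (k - 1))
            + (h (k + 1) - h k) * (χ i k - χ i (k - 1))))
        = (α₂ 1 - α₂ 0) * (h k - h (k - 1))
            + (α₂ 0 - α₂ (-1)) * (h (k + 1) - h k) := by
      intro k
      have e : ∀ i : ZMod N, α₂ (i - k) *
          ((χ i (k + 1) - χ i k) * (h k - h (k - 1))
            + (h (k + 1) - h k) * (χ i k - χ i (k - 1)))
        = (if (k + 1 : ZMod N) = i then α₂ (i - k) * (h k - h (k - 1)) else 0)
          - (if (k : ZMod N) = i then α₂ (i - k) * (h k - h (k - 1)) else 0)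
          + ((if (k : ZMod N) = i then α₂ (i - k) * (h (k + 1) - h k) else 0)
          - (if (k - 1 : ZMod N) = i then α₂ (i - k) * (h (k + 1) - h k) else 0)) := by
        intro i
        simp only [hχ]
        split_ifs <;> ring
      simp only [e, Finset.sum_add_distrib, Finset.sum_sub_distrib, Finset.sum_ite_eq,
        Finset.mem_univ, if_true]
      simp only [add_sub_cancel_left, sub_self, sub_sub_cancel_left]
      ring
    simp only [inner]
    simp only [Finset.sum_add_distrib, ← Finset.mul_sum, mul_sub, Finset.sum_sub_distrib]
    rw [telescope1 h, telescope2 h]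
    ring
end
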